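/- arXiv:1807.10200 — 2 statements merged into one kernel-verified Lean document; each statement's English description precedes it below -/
import Mathlib

section
/- Let 𝒜 ⊆ ℕ be a sequence with increasing enumeration a₀ < a₁ < ⋯. The following are equivalent: (i) A has positive increase, i.e. there exists γ > 0 such that x^{−γ}A(x) is almost increasing; (ii) a_{2n} = O(a_n); (iii) liminf_{x→∞} A(λx)/A(x) > 1 for some λ > 1; (iv) s_{𝒜,h} has positive increase for some h ≥ 1 (equivalently, for every h ≥ 1). -/
open Filter Asymptotics MeasureTheory

/-- Counting function `A(x) = |𝒜 ∩ [0,x]|`. -/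
noncomputable def cntA (A : Set ℕ) (x : ℝ) : ℕ :=
  {n : ℕ | n ∈ A ∧ (n : ℝ) ≤ x}.ncard

/-- The increasing enumeration `a₀ < a₁ < ⋯` of a set `A ⊆ ℕ`. -/
noncomputable def seqA (A : Set ℕ) (n : ℕ) : ℕ := Nat.nth (· ∈ A) n

/-- `A` is an OR sequence: `A(2x) = O(A(x))`. -/
def ORseq (A : Set ℕ) : Prop :=
  (fun x : ℝ => (cntA A (2 * x) : ℝ)) =O[atTop] (fun x : ℝ => (cntA A x : ℝ))

/-- `A` is a PI sequence: `a_{2n} = O(a_n)`. -/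
def PIseq (A : Set ℕ) : Prop :=
  (fun n : ℕ => (seqA A (2 * n) : ℝ)) =O[atTop] (fun n : ℕ => (seqA A n : ℝ))

/-- `A` is an OR₊ sequence: an infinite subset of ℕ that is both OR and PI. -/
def ORplus (A : Set ℕ) : Prop := A.Infinite ∧ ORseq A ∧ PIseq A

/-- `sA A h x` is the number of ordered `h`-tuples of elements of `A` with sum at most `x`. -/
noncomputable def sA (A : Set ℕ) (h : ℕ) (x : ℝ) : ℕ :=
  {t : Fin h → ℕ | (∀ i, t i ∈ A) ∧ ((∑ i, t i : ℕ) : ℝ) ≤ x}.ncard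

/-- `f` is almost increasing (on some tail `[x₀, ∞)`): there is `m > 0` with
`f(y) ≥ m·f(x)` for all `y ≥ x ≥ x₀`. -/
def AlmostIncreasing (f : ℝ → ℝ) : Prop :=
  ∃ m : ℝ, 0 < m ∧ ∃ x₀ : ℝ, ∀ x y : ℝ, x₀ ≤ x → x ≤ y → m * f x ≤ f y

/-- `f` has positive increase: `x^{-γ} f(x)` is almost increasing for some `γ > 0`. -/
def PositiveIncrease (f : ℝ → ℝ) : Prop :=
  ∃ γ : ℝ, 0 < γ ∧ AlmostIncreasing (fun x : ℝ => x ^ (-γ) * f x)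

/-!
Everything reduces to a dilation inequality: for nonnegative monotone `F`, positive increase is
equivalent to `c F(x) ≤ F(λx)` for all large `x`, for some `λ, c > 1`. Iterating the inequality
gives growth like `x^γ` with `λ^γ = c`; conversely, positive increase lets `λ` be chosen for any
prescribed `c`. For the counting function this inequality is (iii), once `A(x) ≤ x + 1` keeps the
liminf finite; evaluated at `x = a_n` with `c = 2` it is (ii); and `s_h(x) ≤ A(x)^h ≤ s_h(hx)`
transfers it between `A` and `s_h`, replacing `λ` by `hλ` and `c` by `c^h`.
-/

section Dilation

variable {F : ℝ → ℝ} {lam c x₁ : ℝ}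

lemma mul_pow_le_of_forall_mul_le (hlam : 1 ≤ lam) (hc : 0 ≤ c) (hx₁ : 0 ≤ x₁)
    (hstep : ∀ x ≥ x₁, c * F x ≤ F (lam * x)) (k : ℕ) {x : ℝ} (hx : x₁ ≤ x) :
    c ^ k * F x ≤ F (lam ^ k * x) := by
  induction k with
  | zero => simp
  | succ k ih =>
    have hle : x₁ ≤ lam ^ k * x :=
      hx.trans (le_mul_of_one_le_left (hx₁.trans hx) (one_le_pow₀ hlam))
    calc c ^ (k + 1) * F x = c * (c ^ k * F x) := by ring
      _ ≤ c * F (lam ^ k * x) := mul_le_mul_of_nonneg_left ih hc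
      _ ≤ F (lam * (lam ^ k * x)) := hstep _ hle
      _ = F (lam ^ (k + 1) * x) := by rw [pow_succ', mul_assoc]

lemma PositiveIncrease.exists_eventually_mul_le (hF : PositiveIncrease F) (hF0 : 0 ≤ F)
    (c : ℝ) :
    ∃ lam, 1 < lam ∧ ∀ᶠ x in atTop, c * F x ≤ F (lam * x) := by
  obtain ⟨γ, hγ, m, hm, x₀, hinc⟩ := hF
  obtain ⟨lam, hlam, hlarge⟩ := ((eventually_gt_atTop 1).and
    ((tendsto_rpow_atTop hγ).eventually_ge_atTop (c / m))).exists
  refine ⟨lam, hlam, ?_⟩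
  filter_upwards [eventually_ge_atTop x₀, eventually_gt_atTop 0] with x hx₀ hx
  have hlam0 : 0 < lam := by linarith
  have h : m * (x ^ (-γ) * F x) ≤ (lam * x) ^ (-γ) * F (lam * x) :=
    hinc x (lam * x) hx₀ (le_mul_of_one_le_left hx.le hlam.le)
  rw [Real.mul_rpow hlam0.le hx.le] at h
  have h' : m * F x * x ^ (-γ) ≤ lam ^ (-γ) * F (lam * x) * x ^ (-γ) := by linarith
  have key := le_of_mul_le_mul_right h' (Real.rpow_pos_of_pos hx _)
  rw [Real.rpow_neg hlam0.le, inv_mul_eq_div, le_div_iff₀ (Real.rpow_pos_of_pos hlam0 _)]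
    at key
  calc c * F x ≤ m * lam ^ γ * F x := by
        gcongr ?_ * _
        · exact hF0 x
        · rwa [div_le_iff₀' hm] at hlarge
    _ ≤ F (lam * x) := by linarith

lemma positiveIncrease_of_eventually_mul_le (hmono : Monotone F) (hF0 : 0 ≤ F)
    (hlam : 1 < lam) (hc : 1 < c) (hstep : ∀ᶠ x in atTop, c * F x ≤ F (lam * x)) :
    PositiveIncrease F := by
  obtain ⟨x₁, hx₁⟩ := eventually_atTop.1 ((eventually_ge_atTop 1).and hstep)
  have hlam0 : 0 < lam := by linarith
  have hc0 : 0 < c := by linarith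
  set γ := Real.log c / Real.log lam
  have hγ : 0 < γ := div_pos (Real.log_pos hc) (Real.log_pos hlam)
  have hlamγ : lam ^ γ = c := by
    rw [Real.rpow_def_of_pos hlam0, mul_div_cancel₀ _ (Real.log_pos hlam).ne', Real.exp_log hc0]
  refine ⟨γ, hγ, c⁻¹, inv_pos.2 hc0, x₁, fun x y hx hxy => ?_⟩
  have hx0 : 0 < x := by linarith [(hx₁ x hx).1]
  have hy0 : 0 < y := hx0.trans_le hxy
  obtain ⟨k, hk, hk'⟩ := exists_nat_pow_near ((one_le_div hx0).2 hxy) hlam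
  have hgrow : c ^ k * F x ≤ F y :=
    (mul_pow_le_of_forall_mul_le hlam.le hc0.le (by linarith [(hx₁ x hx).1])
      (fun z hz => (hx₁ z (hx.trans hz)).2) k le_rfl).trans (hmono ((le_div_iff₀ hx0).1 hk))
  have hdecay : c⁻¹ ^ (k + 1) * x ^ (-γ) ≤ y ^ (-γ) := by
    have h := Real.rpow_le_rpow_of_nonpos hy0 ((div_lt_iff₀ hx0).1 hk').le (neg_nonpos.2 hγ.le)
    rwa [Real.mul_rpow (by positivity) hx0.le, ← Real.rpow_pow_comm hlam0.le,
      Real.rpow_neg hlam0.le, hlamγ] at h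
  calc c⁻¹ * (x ^ (-γ) * F x) = (c⁻¹ ^ (k + 1) * x ^ (-γ)) * (c ^ k * F x) := by
        rw [inv_pow, pow_succ]
        field_simp
    _ ≤ y ^ (-γ) * F y :=
        mul_le_mul hdecay hgrow (mul_nonneg (by positivity) (hF0 x)) (by positivity)

lemma positiveIncrease_iff_exists_eventually_mul_le (hmono : Monotone F) (hF0 : 0 ≤ F) :
    PositiveIncrease F ↔ ∃ lam c, 1 < lam ∧ 1 < c ∧ ∀ᶠ x in atTop, c * F x ≤ F (lam * x) := by
  refine ⟨fun hF => ?_, fun ⟨lam, c, hlam, hc, hstep⟩ =>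
    positiveIncrease_of_eventually_mul_le hmono hF0 hlam hc hstep⟩
  obtain ⟨lam, hlam, hstep⟩ := hF.exists_eventually_mul_le hF0 2
  exact ⟨lam, 2, hlam, one_lt_two, hstep⟩

lemma le_of_eventually_mul_le (hlam : 1 ≤ lam) (hstep : ∀ᶠ x in atTop, c * F x ≤ F (lam * x))
    (hpos : ∀ᶠ x in atTop, 0 < F x) {C : ℝ} (hlin : ∀ᶠ x in atTop, F x ≤ C * x) : c ≤ lam := by
  by_contra! hlt
  obtain ⟨x₁, hx₁⟩ :=
    eventually_atTop.1 (((eventually_ge_atTop 0).and hstep).and (hpos.and hlin))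
  have hFx₁ : 0 < F x₁ := (hx₁ x₁ le_rfl).2.1
  have hbound (k : ℕ) : (c / lam) ^ k ≤ C * x₁ / F x₁ := by
    have hgrow := mul_pow_le_of_forall_mul_le hlam (by linarith) (hx₁ x₁ le_rfl).1.1
      (fun x hx => (hx₁ x hx).1.2) k le_rfl
    have hlin_k := (hx₁ (lam ^ k * x₁)
      (le_mul_of_one_le_left (hx₁ x₁ le_rfl).1.1 (one_le_pow₀ hlam))).2.2
    rw [le_div_iff₀ hFx₁, div_pow, div_mul_eq_mul_div, div_le_iff₀ (by positivity)]
    linarith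
  obtain ⟨k, hk⟩ := pow_unbounded_of_one_lt (C * x₁ / F x₁) ((one_lt_div (by linarith)).2 hlt)
  linarith [hbound k]

/-- Keeps the `liminf` of `F(λx)/F(x)` from being a junk value. -/
lemma isCoboundedUnder_ge_div (hlam : 1 ≤ lam) (hpos : ∀ᶠ x in atTop, 0 < F x) {C : ℝ}
    (hlin : ∀ᶠ x in atTop, F x ≤ C * x) :
    IsCoboundedUnder (· ≥ ·) atTop (fun x => F (lam * x) / F x) := by
  refine ⟨lam, fun a ha => le_of_eventually_mul_le hlam ?_ hpos hlin⟩
  filter_upwards [eventually_map.1 ha, hpos] with x hax hx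
  exact (le_div_iff₀ hx).1 hax

lemma exists_one_lt_liminf_div_iff (hpos : ∀ᶠ x in atTop, 0 < F x) {C : ℝ}
    (hlin : ∀ᶠ x in atTop, F x ≤ C * x) :
    (∃ lam, 1 < lam ∧ 1 < liminf (fun x => F (lam * x) / F x) atTop) ↔
      ∃ lam c, 1 < lam ∧ 1 < c ∧ ∀ᶠ x in atTop, c * F x ≤ F (lam * x) := by
  constructor
  · rintro ⟨lam, hlam, hlim⟩
    obtain ⟨c, hc, hcL⟩ := exists_between hlim
    have hpos' : ∀ᶠ x in atTop, 0 < F (lam * x) :=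
      (tendsto_id.const_mul_atTop (by linarith : (0 : ℝ) < lam)).eventually hpos
    have hbdd : IsBoundedUnder (· ≥ ·) atTop (fun x => F (lam * x) / F x) :=
      isBoundedUnder_of_eventually_ge (a := 0) <| by
        filter_upwards [hpos, hpos'] with x hx hx' using (div_pos hx' hx).le
    refine ⟨lam, c, hlam, hc, ?_⟩
    filter_upwards [eventually_lt_of_lt_liminf hcL hbdd, hpos] with x hx hFx
    exact ((lt_div_iff₀ hFx).1 hx).le
  · rintro ⟨lam, c, hlam, hc, hstep⟩
    refine ⟨lam, hlam, hc.trans_le (le_liminf_of_le (isCoboundedUnder_ge_div hlam.le hpos hlin) ?_)⟩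
    filter_upwards [hstep, hpos] with x hx hFx
    exact (le_div_iff₀ hFx).2 hx

end Dilation

section Counting

variable {A : Set ℕ}

lemma finite_setOf_mem_and_cast_le (A : Set ℕ) (x : ℝ) :
    {n : ℕ | n ∈ A ∧ (n : ℝ) ≤ x}.Finite :=
  (Set.finite_Iic ⌊x⌋₊).subset fun _ hn => Nat.le_floor hn.2

lemma cntA_mono (A : Set ℕ) : Monotone (cntA A) := fun _ y hxy =>
  Set.ncard_le_ncard (fun _ hn => ⟨hn.1, hn.2.trans hxy⟩) (finite_setOf_mem_and_cast_le A y)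

lemma monotone_cntA_cast (A : Set ℕ) : Monotone fun x => (cntA A x : ℝ) :=
  Nat.mono_cast.comp (cntA_mono A)

open Classical in
lemma cntA_eq_count (A : Set ℕ) {x : ℝ} (hx : 0 ≤ x) :
    cntA A x = Nat.count (· ∈ A) (⌊x⌋₊ + 1) := by
  rw [cntA, Nat.count_eq_card_filter_range, ← Set.ncard_coe_finset]
  congr 1
  ext n
  simp only [Set.mem_ofPred_eq, Finset.coe_filter, Finset.mem_range, Nat.lt_succ_iff]
  exact ⟨fun h => ⟨Nat.le_floor h.2, h.1⟩,
    fun h => ⟨h.2, (Nat.cast_le.2 h.1).trans (Nat.floor_le hx)⟩⟩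

lemma cntA_le_add_one (A : Set ℕ) {x : ℝ} (hx : 0 ≤ x) : (cntA A x : ℝ) ≤ x + 1 := by
  classical
  calc (cntA A x : ℝ) ≤ (⌊x⌋₊ + 1 : ℕ) :=
        Nat.cast_le.2 ((cntA_eq_count A hx).trans_le (Nat.count_le _))
    _ ≤ x + 1 := by push_cast; linarith [Nat.floor_le hx]

lemma cntA_seqA (hA : A.Infinite) (n : ℕ) : cntA A (seqA A n) = n + 1 := by
  classical
  rw [cntA_eq_count A (Nat.cast_nonneg _), Nat.floor_natCast, seqA]
  exact Nat.count_nth_succ_of_infinite (p := (· ∈ A)) hA n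

lemma lt_cntA_of_seqA_le (hA : A.Infinite) {m : ℕ} {x : ℝ} (h : (seqA A m : ℝ) ≤ x) :
    m < cntA A x := by
  have := cntA_mono A h
  rw [cntA_seqA hA] at this
  omega

lemma seqA_le_of_lt_cntA {k : ℕ} {x : ℝ} (hx : 0 ≤ x) (hk : k < cntA A x) :
    (seqA A k : ℝ) ≤ x := by
  classical
  rw [cntA_eq_count A hx] at hk
  exact (Nat.cast_le.2 (Nat.lt_succ_iff.1 (Nat.nth_lt_of_lt_count hk))).trans (Nat.floor_le hx)

lemma tendsto_cntA_atTop (hA : A.Infinite) : Tendsto (cntA A) atTop atTop :=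
  tendsto_atTop.2 fun m => (eventually_ge_atTop (seqA A m : ℝ)).mono
    fun _ hx => (lt_cntA_of_seqA_le hA hx).le

lemma tendsto_seqA_atTop (hA : A.Infinite) : Tendsto (fun n => (seqA A n : ℝ)) atTop atTop :=
  tendsto_natCast_atTop_atTop.comp <| tendsto_atTop_mono
    (fun _ => Nat.le_nth fun hf => absurd hf hA) tendsto_id

lemma eventually_cntA_pos (hA : A.Infinite) : ∀ᶠ x in atTop, 0 < (cntA A x : ℝ) :=
  (tendsto_cntA_atTop hA).eventually_gt_atTop 0 |>.mono fun _ hx => Nat.cast_pos.2 hx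

lemma eventually_cntA_le (A : Set ℕ) : ∀ᶠ x in atTop, (cntA A x : ℝ) ≤ 2 * x := by
  filter_upwards [eventually_ge_atTop 1] with x hx
  linarith [cntA_le_add_one A (by linarith : (0 : ℝ) ≤ x)]

end Counting

section TupleCount

lemma ncard_univ_pi_const {ι α : Type*} [Fintype ι] (s : Set α) :
    (Set.univ.pi fun _ : ι => s).ncard = s.ncard ^ Fintype.card ι := by
  rw [Set.ncard_def, Set.encard_pi_eq_prod_encard, ENat.toNat_prod, Set.ncard_def]
  simp

lemma setOf_sA_subset_univ_pi (A : Set ℕ) (h : ℕ) (x : ℝ) :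
    {t : Fin h → ℕ | (∀ i, t i ∈ A) ∧ ((∑ i, t i : ℕ) : ℝ) ≤ x} ⊆
      Set.univ.pi fun _ => {n : ℕ | n ∈ A ∧ (n : ℝ) ≤ x} := by
  rintro t ⟨htA, hsum⟩ i -
  exact ⟨htA i, (Nat.cast_le.2
    (Finset.single_le_sum (fun j _ => Nat.zero_le (t j)) (Finset.mem_univ i))).trans hsum⟩

lemma univ_pi_subset_setOf_sA (A : Set ℕ) (h : ℕ) (x : ℝ) :
    (Set.univ.pi fun _ : Fin h => {n : ℕ | n ∈ A ∧ (n : ℝ) ≤ x}) ⊆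
      {t : Fin h → ℕ | (∀ i, t i ∈ A) ∧ ((∑ i, t i : ℕ) : ℝ) ≤ h * x} := by
  intro t ht
  refine ⟨fun i => (ht i (Set.mem_univ i)).1, ?_⟩
  push_cast
  calc ∑ i, (t i : ℝ) ≤ ∑ _i : Fin h, x :=
        Finset.sum_le_sum fun i _ => (ht i (Set.mem_univ i)).2
    _ = h * x := by simp

lemma finite_setOf_sA (A : Set ℕ) (h : ℕ) (x : ℝ) :
    {t : Fin h → ℕ | (∀ i, t i ∈ A) ∧ ((∑ i, t i : ℕ) : ℝ) ≤ x}.Finite :=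
  (Set.Finite.pi fun _ => finite_setOf_mem_and_cast_le A x).subset (setOf_sA_subset_univ_pi A h x)

lemma sA_mono (A : Set ℕ) (h : ℕ) : Monotone (sA A h) := fun _ y hxy =>
  Set.ncard_le_ncard (fun _ ht => ⟨ht.1, ht.2.trans hxy⟩) (finite_setOf_sA A h y)

lemma sA_le_cntA_pow (A : Set ℕ) (h : ℕ) (x : ℝ) : sA A h x ≤ cntA A x ^ h := by
  calc sA A h x ≤ (Set.univ.pi fun _ : Fin h => {n : ℕ | n ∈ A ∧ (n : ℝ) ≤ x}).ncard :=
        Set.ncard_le_ncard (setOf_sA_subset_univ_pi A h x)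
          (Set.Finite.pi fun _ => finite_setOf_mem_and_cast_le A x)
    _ = cntA A x ^ h := by rw [ncard_univ_pi_const, Fintype.card_fin, cntA]

lemma cntA_pow_le_sA (A : Set ℕ) (h : ℕ) (x : ℝ) : cntA A x ^ h ≤ sA A h (h * x) := by
  calc cntA A x ^ h = (Set.univ.pi fun _ : Fin h => {n : ℕ | n ∈ A ∧ (n : ℝ) ≤ x}).ncard := by
        rw [ncard_univ_pi_const, Fintype.card_fin, cntA]
    _ ≤ sA A h (h * x) :=
        Set.ncard_le_ncard (univ_pi_subset_setOf_sA A h x) (finite_setOf_sA A h _)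

end TupleCount

section Equivalences

variable {A : Set ℕ}

lemma isBigO_seqA_two_mul_of_positiveIncrease (hA : A.Infinite)
    (hPI : PositiveIncrease fun x => (cntA A x : ℝ)) :
    (fun n : ℕ => (seqA A (2 * n) : ℝ)) =O[atTop] (fun n : ℕ => (seqA A n : ℝ)) := by
  obtain ⟨lam, hlam, hstep⟩ := hPI.exists_eventually_mul_le (fun _ => Nat.cast_nonneg _) 2
  refine IsBigO.of_bound lam ?_
  filter_upwards [(tendsto_seqA_atTop hA).eventually hstep] with n hn
  rw [cntA_seqA hA] at hn
  have hlt : 2 * n < cntA A (lam * seqA A n) := by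
    have : (2 * n : ℝ) < cntA A (lam * seqA A n) := by push_cast at hn; linarith
    exact_mod_cast this
  simp only [Real.norm_natCast]
  exact seqA_le_of_lt_cntA (by positivity) hlt

lemma positiveIncrease_of_isBigO_seqA_two_mul (hA : A.Infinite)
    (hO : (fun n : ℕ => (seqA A (2 * n) : ℝ)) =O[atTop] (fun n : ℕ => (seqA A n : ℝ))) :
    PositiveIncrease fun x => (cntA A x : ℝ) := by
  obtain ⟨C, hC, hbound⟩ := hO.exists_pos
  obtain ⟨N, hN⟩ := eventually_atTop.1 hbound.bound
  refine positiveIncrease_of_eventually_mul_le (monotone_cntA_cast A) (fun _ => Nat.cast_nonneg _)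
    (by linarith : 1 < C + 1) (by norm_num : (1 : ℝ) < 3 / 2) ?_
  filter_upwards [(tendsto_cntA_atTop hA).eventually_ge_atTop (N + 2), eventually_ge_atTop 0]
    with x hxN hx
  -- with `A(x) = n + 1`: `a_{2n} ≤ C a_n ≤ C x`, so `A((C+1)x) ≥ 2n + 1 ≥ 3/2 · A(x)`
  obtain ⟨n, hn⟩ : ∃ n, cntA A x = n + 1 := ⟨cntA A x - 1, by omega⟩
  have han : (seqA A n : ℝ) ≤ x := seqA_le_of_lt_cntA hx (by omega)
  have ha2n : (seqA A (2 * n) : ℝ) ≤ (C + 1) * x := by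
    have h := hN n (by omega)
    simp only [Real.norm_natCast] at h
    nlinarith
  have hlt : ((2 * n + 1 : ℕ) : ℝ) ≤ cntA A ((C + 1) * x) := by
    exact_mod_cast lt_cntA_of_seqA_le hA ha2n
  have hn1 : (1 : ℝ) ≤ n := by exact_mod_cast (by omega : 1 ≤ n)
  rw [hn]
  push_cast at hlt ⊢
  linarith

lemma positiveIncrease_sA_of_cntA (hPI : PositiveIncrease fun x => (cntA A x : ℝ)) {h : ℕ}
    (hh : 1 ≤ h) :
    PositiveIncrease fun x => (sA A h x : ℝ) := by
  obtain ⟨lam, hlam, hstep⟩ := hPI.exists_eventually_mul_le (fun _ => Nat.cast_nonneg _) 2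
  have hh1 : (1 : ℝ) ≤ h := by exact_mod_cast hh
  refine positiveIncrease_of_eventually_mul_le (Nat.mono_cast.comp (sA_mono A h))
    (fun _ => Nat.cast_nonneg _) (lam := h * lam) (c := 2 ^ h) (by nlinarith)
    (one_lt_pow₀ one_lt_two (by omega)) ?_
  filter_upwards [hstep] with x hx
  calc (2 : ℝ) ^ h * sA A h x ≤ 2 ^ h * (cntA A x : ℝ) ^ h := by
        gcongr
        exact_mod_cast sA_le_cntA_pow A h x
    _ = (2 * cntA A x) ^ h := (mul_pow _ _ _).symm
    _ ≤ (cntA A (lam * x) : ℝ) ^ h := by gcongr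
    _ ≤ sA A h (h * (lam * x)) := by exact_mod_cast cntA_pow_le_sA A h _
    _ = sA A h (h * lam * x) := by rw [mul_assoc]

lemma positiveIncrease_cntA_of_sA {h : ℕ} (hh : 1 ≤ h)
    (hPI : PositiveIncrease fun x => (sA A h x : ℝ)) :
    PositiveIncrease fun x => (cntA A x : ℝ) := by
  obtain ⟨lam, hlam, hstep⟩ := hPI.exists_eventually_mul_le (fun _ => Nat.cast_nonneg _) (2 ^ h)
  have hh1 : (1 : ℝ) ≤ h := by exact_mod_cast hh
  refine positiveIncrease_of_eventually_mul_le (monotone_cntA_cast A) (fun _ => Nat.cast_nonneg _)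
    (lam := lam * h) (c := 2) (by nlinarith) one_lt_two ?_
  filter_upwards [(tendsto_id.const_mul_atTop (by linarith : (0 : ℝ) < h)).eventually hstep]
    with u hu
  have key : (2 * (cntA A u : ℝ)) ^ h ≤ (cntA A (lam * h * u) : ℝ) ^ h :=
    calc (2 * (cntA A u : ℝ)) ^ h = 2 ^ h * (cntA A u : ℝ) ^ h := mul_pow _ _ _
      _ ≤ 2 ^ h * sA A h (h * u) := by
          gcongr
          exact_mod_cast cntA_pow_le_sA A h u
      _ ≤ sA A h (lam * (h * u)) := hu
      _ ≤ (cntA A (lam * (h * u)) : ℝ) ^ h := by exact_mod_cast sA_le_cntA_pow A h _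
      _ = (cntA A (lam * h * u) : ℝ) ^ h := by rw [mul_assoc]
  exact (pow_le_pow_iff_left₀ (by positivity) (by positivity) (by omega)).1 key

lemma positiveIncrease_cntA_iff_exists_one_lt_liminf (hA : A.Infinite) :
    PositiveIncrease (fun x => (cntA A x : ℝ)) ↔
      ∃ lam : ℝ, 1 < lam ∧ 1 < liminf (fun x => (cntA A (lam * x) : ℝ) / cntA A x) atTop :=
  (positiveIncrease_iff_exists_eventually_mul_le (monotone_cntA_cast A)
    (fun _ => Nat.cast_nonneg _)).trans
    (exists_one_lt_liminf_div_iff (eventually_cntA_pos hA) (eventually_cntA_le A)).symm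

end Equivalences

theorem stmt_13 (A : Set ℕ) (hA : A.Infinite) :
    List.TFAE [
      -- (i) A has positive increase
      PositiveIncrease (fun x : ℝ => (cntA A x : ℝ)),
      -- (ii) a_{2n} = O(a_n)
      (fun n : ℕ => (seqA A (2 * n) : ℝ)) =O[atTop] (fun n : ℕ => (seqA A n : ℝ)),
      -- (iii) liminf A(λx)/A(x) > 1 for some λ > 1
      ∃ lam : ℝ, 1 < lam ∧
        1 < Filter.liminf (fun x : ℝ => (cntA A (lam * x) : ℝ) / (cntA A x : ℝ)) atTop,
      -- (iv) s_{A,h} has positive increase for some h ≥ 1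
      ∃ h : ℕ, 1 ≤ h ∧ PositiveIncrease (fun x : ℝ => (sA A h x : ℝ)),
      -- (iv') s_{A,h} has positive increase for every h ≥ 1
      ∀ h : ℕ, 1 ≤ h → PositiveIncrease (fun x : ℝ => (sA A h x : ℝ))
    ] := by
  tfae_have 1 → 2 := isBigO_seqA_two_mul_of_positiveIncrease hA
  tfae_have 2 → 1 := positiveIncrease_of_isBigO_seqA_two_mul hA
  tfae_have 1 ↔ 3 := positiveIncrease_cntA_iff_exists_one_lt_liminf hA
  tfae_have 1 → 5 := fun hPI _ hh => positiveIncrease_sA_of_cntA hPI hh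
  tfae_have 5 → 4 := fun hall => ⟨1, le_rfl, hall 1 le_rfl⟩
  tfae_have 4 → 1 := fun ⟨_, hh, hPI⟩ => positiveIncrease_cntA_of_sA hh hPI
  tfae_finish
end

section
/- Let 𝒞 := [0, 2^{2^{17}}] ∪ ⋃_{k≥17} ( {2^{2^k} + t(k−1) : 0 ≤ t ≤ 2^{2^k}} ∪ [k·2^{2^k}, 2^{2^{k+1}}] ) ⊆ ℕ (intervals meaning the integers they contain), with increasing enumeration c₀ < c₁ < c₂ < ⋯. Then 2𝒞 = ℕ (so 𝒞 is an additive basis of order 2), but c_{2n} ≠ O(c_n) (indeed limsup_{n→∞} c_{2n}/c_n = ∞), so 𝒞 is not a PI sequence. -/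
/-!
Every `n ∈ [2^{2^k}, k·2^{2^k})` with `k ≥ 17` is a sum of two elements of the upper half
`[2^{2^k}/2, 2^{2^k}] ⊆ 𝒞`, or of one of them and a term `2^{2^k} + t(k-1)` of the progression,
which works because the half-interval is longer than the step `k - 1`; larger `n` up to
`2^{2^{k+1}}` lie in `𝒞` themselves.

For `Q = 2^{2^k}` the half-interval puts `Q` at an index `n ≥ Q/2`, while only the `Q/2`
progression terms of `𝒞` lie in `[Q, Q + (k-1)Q/2)`; hence `c_{2n} ≥ (k+1)/2 · c_n`.
-/

open Filter Asymptotics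

/-- The sequence 𝒞 from Remark A.9: `[0, 2^{2^{17}}]` together with, for each `k ≥ 17`,
the arithmetic progression `{2^{2^k} + t(k−1) : 0 ≤ t ≤ 2^{2^k}}` and the interval
`[k·2^{2^k}, 2^{2^{k+1}}]`. -/
def Cseq : Set ℕ :=
  Set.Icc 0 (2 ^ 2 ^ 17) ∪
    ⋃ k ∈ Set.Ici 17,
      ({m : ℕ | ∃ t ≤ 2 ^ 2 ^ k, m = 2 ^ 2 ^ k + t * (k - 1)} ∪
        Set.Icc (k * 2 ^ 2 ^ k) (2 ^ 2 ^ (k + 1)))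

open Finset in
theorem Nat.count_le_of_dvd {q : ℕ → Prop} [DecidablePred q] {d m : ℕ}
    (h : ∀ i < m * d, q i → d ∣ i) : Nat.count q (m * d) ≤ m := by
  rw [Nat.count_eq_card_filter_range]
  calc #{i ∈ range (m * d) | q i} ≤ #((range m).image (· * d)) := by
        refine card_le_card fun i hi => ?_
        obtain ⟨hi, hqi⟩ := mem_filter.1 hi
        obtain ⟨j, rfl⟩ := h i (mem_range.1 hi) hqi
        rw [mem_range, mul_comm m] at hi
        exact mem_image.2
          ⟨j, mem_range.2 (lt_of_mul_lt_mul_left hi (Nat.zero_le d)), mul_comm j d⟩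
    _ ≤ m := Finset.card_image_le.trans (card_range m).le

theorem exists_add_eq_of_Icc_subset_of_progression {S : Set ℕ} {a b x d T n : ℕ}
    (hd : 0 < d) (hab : a + d ≤ b + 1) (hI : Set.Icc a b ⊆ S) (hP : ∀ t ≤ T, x + t * d ∈ S)
    (h₁ : x + a ≤ n) (h₂ : n ≤ x + T * d + b) : ∃ u ∈ S, ∃ v ∈ S, u + v = n := by
  obtain ⟨t, htT, htd, hv⟩ : ∃ t ≤ T, t * d ≤ n - x - a ∧ n - (x + t * d) ≤ b := by
    rcases le_or_gt T ((n - x - a) / d) with h | h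
    · have := (Nat.mul_le_mul_right d h).trans (Nat.div_mul_le_self (n - x - a) d)
      exact ⟨T, le_rfl, this, by omega⟩
    · have := Nat.lt_div_mul_add (a := n - x - a) hd
      exact ⟨_, h.le, Nat.div_mul_le_self _ _, by omega⟩
  exact ⟨x + t * d, hP t htT, n - (x + t * d), hI ⟨by omega, hv⟩, by omega⟩

theorem not_isBigO_of_frequently_lt_div {f g : ℕ → ℝ}
    (h : ∀ M : ℝ, ∃ᶠ n in atTop, M < f n / g n) : ¬ f =O[atTop] g := by
  intro hfg
  obtain ⟨C, hC, hbound⟩ := hfg.exists_nonneg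
  obtain ⟨n, hn, hfgn⟩ := ((h C).and_eventually hbound.bound).exists
  have : f n / g n ≤ C := calc
    f n / g n ≤ |f n / g n| := le_abs_self _
    _ = ‖f n‖ / ‖g n‖ := by rw [Real.norm_eq_abs, Real.norm_eq_abs, abs_div]
    _ ≤ C := div_le_of_le_mul₀ (norm_nonneg _) hC hfgn
  linarith

theorem frequently_lt_div_of_forall_exists_mul_le {f g : ℕ → ℕ}
    (h : ∀ K N : ℕ, ∃ n ≥ N, 0 < g n ∧ K * g n ≤ f n) (M : ℝ) :
    ∃ᶠ n in atTop, M < (f n : ℝ) / g n := by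
  refine frequently_atTop.2 fun N => ?_
  obtain ⟨n, hnN, hg, hfg⟩ := h (⌈M⌉₊ + 1) N
  refine ⟨n, hnN, ?_⟩
  have hg' : (0 : ℝ) < g n := by exact_mod_cast hg
  have hfg' : ((⌈M⌉₊ + 1 : ℕ) : ℝ) * g n ≤ f n := by exact_mod_cast hfg
  rw [lt_div_iff₀ hg']
  push_cast at hfg'
  nlinarith [Nat.le_ceil M]

theorem Nat.mul_sub_one_add_self {k Q : ℕ} (hk : 1 ≤ k) : Q * (k - 1) + Q = k * Q := by
  rw [Nat.mul_sub_one, Nat.sub_add_cancel (Nat.le_mul_of_pos_right Q hk), mul_comm]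

theorem two_mul_le_two_pow_two_pow (k : ℕ) : 2 * k ≤ 2 ^ 2 ^ k := calc
  2 * k ≤ 2 ^ (k + 1) := by rw [pow_succ]; linarith [Nat.lt_two_pow_self (n := k)]
  _ ≤ 2 ^ 2 ^ k := Nat.pow_le_pow_right two_pos Nat.lt_two_pow_self

theorem two_mul_mul_two_pow_two_pow_le (k : ℕ) : 2 * (k * 2 ^ 2 ^ k) ≤ 2 ^ 2 ^ (k + 1) := by
  rw [pow_succ, pow_mul, sq, ← mul_assoc]
  exact Nat.mul_le_mul_right _ (two_mul_le_two_pow_two_pow k)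

theorem two_pow_two_pow_le_two_pow_two_pow {j k : ℕ} (h : j ≤ k) : 2 ^ 2 ^ j ≤ 2 ^ 2 ^ k :=
  Nat.pow_le_pow_right two_pos (Nat.pow_le_pow_right two_pos h)

theorem even_two_pow_two_pow (k : ℕ) : Even (2 ^ 2 ^ k) :=
  (Nat.even_pow' (by positivity)).2 even_two

theorem exists_two_pow_two_pow_le_lt {n : ℕ} (h : 2 ≤ n) :
    ∃ k, 2 ^ 2 ^ k ≤ n ∧ n < 2 ^ 2 ^ (k + 1) := by
  have hlog : Nat.log 2 n ≠ 0 := (Nat.log_pos one_lt_two h).ne'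
  refine ⟨Nat.log 2 (Nat.log 2 n), ?_, ?_⟩
  · exact (Nat.pow_le_pow_right two_pos (Nat.pow_log_le_self 2 hlog)).trans
      (Nat.pow_log_le_self 2 (by omega))
  · exact (Nat.lt_pow_succ_log_self one_lt_two n).trans_le
      (Nat.pow_le_pow_right two_pos (Nat.lt_pow_succ_log_self one_lt_two _))

namespace Cseq

def block (k : ℕ) : Set ℕ :=
  {m : ℕ | ∃ t ≤ 2 ^ 2 ^ k, m = 2 ^ 2 ^ k + t * (k - 1)} ∪
    Set.Icc (k * 2 ^ 2 ^ k) (2 ^ 2 ^ (k + 1))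

theorem mem_iff {m : ℕ} : m ∈ Cseq ↔ m ≤ 2 ^ 2 ^ 17 ∨ ∃ k ≥ 17, m ∈ block k := by
  simp only [Cseq, block, Set.mem_union, Set.mem_Icc, zero_le, true_and, Set.mem_iUnion,
    Set.mem_Ici, exists_prop]

theorem mem_of_le {m : ℕ} (h : m ≤ 2 ^ 2 ^ 17) : m ∈ Cseq :=
  mem_iff.2 (Or.inl h)

theorem mem_of_progression {k t : ℕ} (hk : 17 ≤ k) (ht : t ≤ 2 ^ 2 ^ k) :
    2 ^ 2 ^ k + t * (k - 1) ∈ Cseq :=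
  mem_iff.2 (Or.inr ⟨k, hk, Or.inl ⟨t, ht, rfl⟩⟩)

theorem mem_of_mul_le {k m : ℕ} (hk : 17 ≤ k) (h₁ : k * 2 ^ 2 ^ k ≤ m)
    (h₂ : m ≤ 2 ^ 2 ^ (k + 1)) : m ∈ Cseq :=
  mem_iff.2 (Or.inr ⟨k, hk, Or.inr ⟨h₁, h₂⟩⟩)

theorem block_subset_Icc {k : ℕ} (hk : 1 ≤ k) :
    block k ⊆ Set.Icc (2 ^ 2 ^ k) (2 ^ 2 ^ (k + 1)) := by
  have hkQ := two_mul_mul_two_pow_two_pow_le k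
  have := Nat.mul_sub_one_add_self (Q := 2 ^ 2 ^ k) hk
  rintro m (⟨t, ht, rfl⟩ | ⟨h₁, h₂⟩)
  · have := Nat.mul_le_mul_right (k - 1) ht
    constructor <;> omega
  · exact ⟨(Nat.le_mul_of_pos_left _ hk).trans h₁, h₂⟩

theorem mem_of_le_two_mul {k m : ℕ} (hk : 17 ≤ k) (h₁ : 2 ^ 2 ^ k ≤ 2 * m)
    (h₂ : m ≤ 2 ^ 2 ^ k) : m ∈ Cseq := by
  obtain rfl | hk := hk.eq_or_lt
  · exact mem_of_le h₂
  obtain ⟨j, rfl⟩ := Nat.exists_eq_add_of_lt hk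
  have := two_mul_mul_two_pow_two_pow_le (17 + j)
  exact mem_of_mul_le (by omega) (by omega) h₂

theorem eq_progression_of_mem {k m : ℕ} (hk : 17 ≤ k) (hm : m ∈ Cseq)
    (h₁ : 2 ^ 2 ^ k ≤ m) (h₂ : m < k * 2 ^ 2 ^ k) : ∃ t, m = 2 ^ 2 ^ k + t * (k - 1) := by
  rcases mem_iff.1 hm with hm | ⟨j, hj, hmj⟩
  · have := two_pow_two_pow_le_two_pow_two_pow hk
    exact ⟨0, by omega⟩
  obtain ⟨hm₁, hm₂⟩ := block_subset_Icc (by omega) hmj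
  rcases lt_trichotomy j k with hjk | rfl | hjk
  · have := two_pow_two_pow_le_two_pow_two_pow (by omega : j + 1 ≤ k)
    exact ⟨0, by omega⟩
  · rcases hmj with ⟨t, -, rfl⟩ | ⟨hj₁, -⟩
    · exact ⟨t, rfl⟩
    · omega
  · have := two_pow_two_pow_le_two_pow_two_pow (by omega : k + 1 ≤ j)
    have := two_mul_mul_two_pow_two_pow_le k
    omega

theorem infinite : Cseq.Infinite := by
  refine Set.infinite_of_forall_exists_gt fun a => ?_
  obtain ⟨k, hk, hak⟩ : ∃ k, 17 ≤ k ∧ a < k := ⟨max 17 (a + 1), le_max_left _ _, by omega⟩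
  have := two_mul_mul_two_pow_two_pow_le k
  have := Nat.le_mul_of_pos_right k (show 0 < 2 ^ 2 ^ k by positivity)
  exact ⟨k * 2 ^ 2 ^ k, mem_of_mul_le hk le_rfl (by omega), by omega⟩

theorem exists_add_eq (n : ℕ) : ∃ a ∈ Cseq, ∃ b ∈ Cseq, a + b = n := by
  rcases le_or_gt n (2 ^ 2 ^ 17) with h | h
  · exact ⟨n, mem_of_le h, 0, mem_of_le (Nat.zero_le _), rfl⟩
  obtain ⟨k, hQn, hnQ⟩ := exists_two_pow_two_pow_le_lt
    ((Nat.le_self_pow (by positivity) 2).trans h.le)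
  have hk : 17 ≤ k := by
    by_contra! hk
    have := two_pow_two_pow_le_two_pow_two_pow (show k + 1 ≤ 17 by omega)
    omega
  rcases le_or_gt (k * 2 ^ 2 ^ k) n with hn | hn
  · exact ⟨n, mem_of_mul_le hk hn hnQ.le, 0, mem_of_le (Nat.zero_le _), rfl⟩
  have hkQ := two_mul_le_two_pow_two_pow k
  have hQ := Nat.two_mul_div_two_of_even (even_two_pow_two_pow k)
  set Q := 2 ^ 2 ^ k
  have hI : Set.Icc (Q / 2) Q ⊆ Cseq :=
    fun m hm => mem_of_le_two_mul hk (by have := hm.1; omega) hm.2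
  rcases le_or_gt n (2 * Q) with h₂ | h₂
  · exact exists_add_eq_of_Icc_subset_of_progression (x := Q / 2) (d := 1) (T := Q - Q / 2)
      one_pos (by omega) hI (fun t ht => hI ⟨by omega, by omega⟩) (by omega) (by omega)
  · have := Nat.mul_sub_one_add_self (Q := Q) (show 1 ≤ k by omega)
    exact exists_add_eq_of_Icc_subset_of_progression (x := Q) (d := k - 1) (T := Q)
      (by omega) (by omega) hI (fun t ht => mem_of_progression hk ht) (by omega) (by omega)

theorem exists_nth_eq_and_mul_le_nth_two_mul {k : ℕ} (hk : 17 ≤ k) :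
    ∃ n, 2 ^ 2 ^ k / 2 ≤ n ∧ Nat.nth (· ∈ Cseq) n = 2 ^ 2 ^ k ∧
      (k + 1) * 2 ^ 2 ^ k ≤ 2 * Nat.nth (· ∈ Cseq) (2 * n) := by
  classical
  set Q := 2 ^ 2 ^ k
  set H := Q / 2
  have hQ : 2 * H = Q := Nat.two_mul_div_two_of_even (even_two_pow_two_pow k)
  have hkQ := Nat.mul_sub_one_add_self (Q := Q) (show 1 ≤ k by omega)
  have hHQ : H * (k - 1) ≤ Q * (k - 1) := Nat.mul_le_mul_right _ (by omega)
  have hH : H ≤ Nat.count (· ∈ Cseq) Q := calc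
    H = Nat.count (fun i => H + i ∈ Cseq) H :=
      (Nat.count_of_forall fun i hi => mem_of_le_two_mul hk (by omega) (by omega)).symm
    _ ≤ Nat.count (· ∈ Cseq) (H + H) := by rw [Nat.count_add]; exact Nat.le_add_left _ _
    _ = Nat.count (· ∈ Cseq) Q := by rw [← hQ, two_mul]
  have hgap : Nat.count (· ∈ Cseq) (Q + H * (k - 1)) ≤ Nat.count (· ∈ Cseq) Q + H := by
    rw [Nat.count_add]
    refine Nat.add_le_add_left (Nat.count_le_of_dvd fun i hi hmem => ?_) _
    obtain ⟨t, ht⟩ := eq_progression_of_mem hk hmem (Nat.le_add_right _ _)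
      (show Q + i < k * Q by omega)
    exact ⟨t, by rw [mul_comm]; omega⟩
  refine ⟨Nat.count (· ∈ Cseq) Q, hH,
    Nat.nth_count (p := (· ∈ Cseq)) (mem_of_le_two_mul hk (by omega) le_rfl), ?_⟩
  have := (Nat.count_le_iff_le_nth (p := (· ∈ Cseq)) Cseq.infinite).1
    (hgap.trans (by omega : _ ≤ 2 * Nat.count (· ∈ Cseq) Q))
  calc (k + 1) * Q = 2 * (Q + H * (k - 1)) := by rw [← hQ] at hkQ ⊢; linarith
    _ ≤ _ := Nat.mul_le_mul_left 2 this

theorem exists_mul_le_nth_two_mul (K N : ℕ) :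
    ∃ n ≥ N, 0 < Nat.nth (· ∈ Cseq) n ∧
      K * Nat.nth (· ∈ Cseq) n ≤ Nat.nth (· ∈ Cseq) (2 * n) := by
  obtain ⟨k, hk, hNk, hKk⟩ : ∃ k, 17 ≤ k ∧ N ≤ k ∧ 2 * K ≤ k :=
    ⟨max 17 (max N (2 * K)), by omega, by omega, by omega⟩
  obtain ⟨n, hn, hnth, hle⟩ := exists_nth_eq_and_mul_le_nth_two_mul hk
  have := two_mul_le_two_pow_two_pow k
  refine ⟨n, by omega, by rw [hnth]; positivity, ?_⟩
  rw [hnth]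
  nlinarith

end Cseq

theorem stmt_18 :
    (∀ n : ℕ, ∃ a ∈ Cseq, ∃ b ∈ Cseq, a + b = n) ∧
    ¬ ((fun n : ℕ => (Nat.nth (· ∈ Cseq) (2 * n) : ℝ)) =O[atTop]
        (fun n : ℕ => (Nat.nth (· ∈ Cseq) n : ℝ))) ∧
    ∀ M : ℝ, ∃ᶠ n : ℕ in atTop,
      M < (Nat.nth (· ∈ Cseq) (2 * n) : ℝ) / (Nat.nth (· ∈ Cseq) n : ℝ) := by
  have hratio := frequently_lt_div_of_forall_exists_mul_le Cseq.exists_mul_le_nth_two_mul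
  exact ⟨Cseq.exists_add_eq, not_isBigO_of_frequently_lt_div hratio, hratio⟩
end
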